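/- Let T be a finite rooted tree with a friendly labeling function L : G → 𝓛, let v be an interior vertex of T with incident edges e_1,…,e_c, and let g = Π_{i=1}^d q_{(l_i^1,…,l_i^c)} − Π_{i=1}^d q_{(m_i^1,…,m_i^c)} be a binomial in the toric ideal I_{T_v,L} of the claw tree T_v at v. For each row i and column j, let L_i^j ∈ im(L^{T_{v,e_j}}, l_i^j) and M_i^j ∈ im(L^{T_{v,e_j}}, m_i^j) be consistent labelings such that, for each j, the multisets {L_i^j : 1 ≤ i ≤ d} and {M_i^j : 1 ≤ i ≤ d} coincide. Then each assembled labeling λ_i (restricting to L_i^j on T_{v,e_j} for every j) and μ_i (restricting to M_i^j on T_{v,e_j} for every j) is a consistent labeling of T, and the binomial g* = Π_{i=1}^d q_{λ_i} − Π_{i=1}^d q_{μ_i} lies in the toric ideal I_{T,L}. -/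

import Mathlib

open MvPolynomial

attribute [local instance] Classical.propDecidable

/-- The set `Z_m ⊆ G^m` of tuples with `g_1 + ⋯ + g_{m-1} = g_m`. -/
def ZSet (G : Type) [AddCommGroup G] (m : ℕ) : Set (Fin m → G) :=
  {g | (∑ i ∈ Finset.univ.filter fun i : Fin m => (i : ℕ) < m - 1, g i) =
       ∑ i ∈ Finset.univ.filter fun i : Fin m => ¬ (i : ℕ) < m - 1, g i}

/-- A labeling function `L : G → 𝓛` is `m`-friendly if for every tuple in `Z_m`, every
value with the same label at a coordinate can be realized at that coordinate by another
tuple in `Z_m` with the same label vector. -/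
def IsMFriendly {G 𝓛 : Type} [AddCommGroup G] (L : G → 𝓛) (m : ℕ) : Prop :=
  ∀ g ∈ ZSet G m, ∀ i : Fin m, ∀ h : G, L h = L (g i) →
    ∃ g' ∈ ZSet G m, (∀ j, L (g' j) = L (g j)) ∧ g' i = h

/-- A labeling function is friendly if it is `m`-friendly for all `m ≥ 3`. -/
def Friendly {G 𝓛 : Type} [AddCommGroup G] (L : G → 𝓛) : Prop :=
  ∀ m, 3 ≤ m → IsMFriendly L m

/-- A finite rooted tree, given by a parent function on a finite vertex set. -/
structure PhyloTree where
  V : Type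
  fintypeV : Fintype V
  root : V
  parent : V → V
  parent_root : parent root = root
  reaches_root : ∀ v, ∃ n : ℕ, parent^[n] v = root

attribute [instance] PhyloTree.fintypeV

namespace PhyloTree

variable (T : PhyloTree)

/-- A vertex is a leaf if it has no children. -/
def IsLeaf (v : T.V) : Prop := ∀ u, T.parent u = v → u = v

/-- The type of leaves of `T`. -/
def Leaf : Type := {v : T.V // T.IsLeaf v}

noncomputable instance : Fintype T.Leaf :=
  have : DecidablePred T.IsLeaf := Classical.decPred _
  Subtype.fintype _

/-- `u` is a (weak) descendant of `v`. -/
def Desc (u v : T.V) : Prop := ∃ n : ℕ, T.parent^[n] u = v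

/-- The edges of `T` are indexed by its vertices: a vertex `v` indexes the edge from
`parent v` to `v`, and the root indexes the extra pendant root edge `e_r`.
`leavesBelow v` is the set `Λ(e)` of leaves below the edge indexed by `v`. -/
noncomputable def leavesBelow (v : T.V) : Finset T.Leaf :=
  Finset.univ.filter fun l => T.Desc l.1 v

/-- An edge is interior if its lower endpoint is neither a leaf nor the root
(the latter excluding the pendant root edge). -/
def InteriorEdge (e : T.V) : Prop := ¬ T.IsLeaf e ∧ e ≠ T.root

/-- The edge set of the subtree `T_{e,-}`: the edge `e` together with all edges below it. -/
def Eminus (e : T.V) : Set T.V := {e' | T.Desc e' e}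

/-- The edge set of the subtree `T_{e,+}`: the edge `e` together with all edges not in `T_{e,-}`. -/
def Eplus (e : T.V) : Set T.V := {e' | e' = e ∨ ¬ T.Desc e' e}

theorem mem_Eminus_self (e : T.V) : e ∈ T.Eminus e := ⟨0, rfl⟩

theorem mem_Eplus_self (e : T.V) : e ∈ T.Eplus e := Or.inl rfl

variable {G 𝓛 : Type} [AddCommGroup G] [Fintype G]

/-- `g(e)`: the sum of the group elements at the leaves below the edge `e`. -/
noncomputable def gsum (g : T.Leaf → G) (e : T.V) : G := ∑ l ∈ T.leavesBelow e, g l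

/-- The consistent labelings of the subtree with edge set `S`. -/
def consLab (L : G → 𝓛) (S : Set T.V) : Set (↥S → 𝓛) :=
  Set.range fun g : T.Leaf → G => fun e' : ↥S => L (T.gsum g e'.1)

/-- The consistent labelings of the whole tree `T`, i.e. the image of `L^T`. -/
def consLabFull (L : G → 𝓛) : Set (T.V → 𝓛) :=
  Set.range fun g : T.Leaf → G => fun e : T.V => L (T.gsum g e)

/-- The toric ideal of the subtree with edge set `S` (in Fourier coordinates `q_λ`,
`λ` a consistent labeling): the kernel of the monomial map `q_λ ↦ ∏_e a^{(e)}_{λ(e)}`. -/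
noncomputable def toricIdeal (L : G → 𝓛) (S : Set T.V) :
    Ideal (MvPolynomial ↥(T.consLab L S) ℂ) :=
  RingHom.ker (aeval (R := ℂ)
    fun μ : ↥(T.consLab L S) => ∏ e' : ↥S, (X (e', μ.1 e') : MvPolynomial (↥S × 𝓛) ℂ))

/-- The toric ideal `I_{T,L}` of the tree `T`. -/
noncomputable def toricIdealFull (L : G → 𝓛) :
    Ideal (MvPolynomial ↥(T.consLabFull L) ℂ) :=
  RingHom.ker (aeval (R := ℂ)
    fun μ : ↥(T.consLabFull L) => ∏ e : T.V, (X (e, μ.1 e) : MvPolynomial (T.V × 𝓛) ℂ))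

/-- Glue a labeling of `T_{e,-}` and a labeling of `T_{e,+}` into a labeling of `T`. -/
noncomputable def glue (e : T.V) (μ : ↥(T.Eminus e) → 𝓛) (ν : ↥(T.Eplus e) → 𝓛) :
    T.V → 𝓛 :=
  fun e' => if h : T.Desc e' e then μ ⟨e', h⟩ else ν ⟨e', Or.inr h⟩

/-- `mix e λ₁ λ₂` agrees with `λ₁` on `T_{e,-}` and with `λ₂` on the rest of `T`. -/
noncomputable def mix (e : T.V) (f g : T.V → 𝓛) : T.V → 𝓛 :=
  fun e' => if T.Desc e' e then f e' else g e'

end PhyloTree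

/-- A binomial: a difference of two monic monomials. -/
def IsBinom {σ : Type} (p : MvPolynomial σ ℂ) : Prop :=
  ∃ (d : ℕ) (r r' : Fin d → σ), p = (∏ i, X (r i)) - ∏ i, X (r' i)

namespace PhyloTree

variable (T : PhyloTree) {G 𝓛 : Type} [AddCommGroup G] [Fintype G]

/-- The children of a vertex `v`. -/
def children (v : T.V) : Set T.V := {u | T.parent u = v ∧ u ≠ v}

/-- The edges incident to a vertex `v`: the edge above `v` (indexed by `v` itself)
together with the edges above the children of `v`. -/
def incident (v : T.V) : Set T.V := {u | u = v ∨ (T.parent u = v ∧ u ≠ v)}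

theorem mem_children_of_incident {v : T.V} (u : ↥(T.incident v)) (h : u.1 ≠ v) :
    u.1 ∈ T.children v := by
  rcases u.2 with h' | h'
  · exact absurd h' h
  · exact h'

/-- The consistent labelings of the claw tree `T_v` at an interior vertex `v`:
the child edges receive arbitrary group elements, and the edge towards the root
receives their sum; then apply `L`. -/
noncomputable def consLabClaw (L : G → 𝓛) (v : T.V) : Set (↥(T.incident v) → 𝓛) :=
  Set.range fun g : ↥(T.children v) → G =>
    fun u : ↥(T.incident v) =>
      if h : u.1 = v then L (∑ c : ↥(T.children v), g c)
      else L (g ⟨u.1, T.mem_children_of_incident u h⟩)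

/-- The toric ideal `I_{T_v,L}` of the claw tree at `v`. -/
noncomputable def clawIdeal (L : G → 𝓛) (v : T.V) :
    Ideal (MvPolynomial ↥(T.consLabClaw L v) ℂ) :=
  RingHom.ker (aeval (R := ℂ) fun μ : ↥(T.consLabClaw L v) =>
    ∏ u : ↥(T.incident v), (X (u, μ.1 u) : MvPolynomial (↥(T.incident v) × 𝓛) ℂ))

/-- The edge set of the subtree `T_{v,e}` hanging off the vertex `v` at the incident
edge `e`: the one of `T_{e,-}`, `T_{e,+}` which has `v` as a leaf. -/
def sideSet (v : T.V) (u : ↥(T.incident v)) : Set T.V :=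
  if u.1 = v then T.Eplus v else T.Eminus u.1

theorem mem_sideSet (v : T.V) (u : ↥(T.incident v)) : u.1 ∈ T.sideSet v u := by
  unfold sideSet
  split_ifs with h
  · exact Or.inl h
  · exact ⟨0, rfl⟩

/-- The set `Quad(e,T)` of quadratic binomials associated to an interior edge `e`. -/
noncomputable def QuadSet (L : G → 𝓛) (e : T.V) :
    Set (MvPolynomial ↥(T.consLabFull L) ℂ) :=
  {p | ∃ l1 l2 : ↥(T.consLabFull L), l1.1 e = l2.1 e ∧
    ∃ (h3 : T.mix e l1.1 l2.1 ∈ T.consLabFull L) (h4 : T.mix e l2.1 l1.1 ∈ T.consLabFull L),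
      p = X l1 * X l2 -
          X (⟨T.mix e l1.1 l2.1, h3⟩ : ↥(T.consLabFull L)) *
          X (⟨T.mix e l2.1 l1.1, h4⟩ : ↥(T.consLabFull L))}

/-- `Ext(𝓑 → T)` for a set `𝓑` of binomials in `I_{T_{e,-},L}`. -/
noncomputable def ExtMinus (L : G → 𝓛) (e : T.V)
    (B : Set (MvPolynomial ↥(T.consLab L (T.Eminus e)) ℂ)) :
    Set (MvPolynomial ↥(T.consLabFull L) ℂ) :=
  {p | ∃ (d : ℕ) (r r' : Fin d → ↥(T.consLab L (T.Eminus e)))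
        (s : Fin d → ↥(T.consLab L (T.Eplus e))),
      ((∏ i, X (r i)) - ∏ i, X (r' i)) ∈ B ∧
      (∀ i, (r i).1 ⟨e, T.mem_Eminus_self e⟩ = (r' i).1 ⟨e, T.mem_Eminus_self e⟩) ∧
      (∀ i, (s i).1 ⟨e, T.mem_Eplus_self e⟩ = (r i).1 ⟨e, T.mem_Eminus_self e⟩) ∧
      ∃ (h : ∀ i, T.glue e (r i).1 (s i).1 ∈ T.consLabFull L)
        (h' : ∀ i, T.glue e (r' i).1 (s i).1 ∈ T.consLabFull L),
        p = (∏ i, X (⟨T.glue e (r i).1 (s i).1, h i⟩ : ↥(T.consLabFull L))) -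
            ∏ i, X (⟨T.glue e (r' i).1 (s i).1, h' i⟩ : ↥(T.consLabFull L))}

/-- `Ext(T ← 𝓑)` for a set `𝓑` of binomials in `I_{T_{e,+},L}`. -/
noncomputable def ExtPlus (L : G → 𝓛) (e : T.V)
    (B : Set (MvPolynomial ↥(T.consLab L (T.Eplus e)) ℂ)) :
    Set (MvPolynomial ↥(T.consLabFull L) ℂ) :=
  {p | ∃ (d : ℕ) (s s' : Fin d → ↥(T.consLab L (T.Eplus e)))
        (r : Fin d → ↥(T.consLab L (T.Eminus e))),
      ((∏ i, X (s i)) - ∏ i, X (s' i)) ∈ B ∧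
      (∀ i, (s i).1 ⟨e, T.mem_Eplus_self e⟩ = (s' i).1 ⟨e, T.mem_Eplus_self e⟩) ∧
      (∀ i, (r i).1 ⟨e, T.mem_Eminus_self e⟩ = (s i).1 ⟨e, T.mem_Eplus_self e⟩) ∧
      ∃ (h : ∀ i, T.glue e (r i).1 (s i).1 ∈ T.consLabFull L)
        (h' : ∀ i, T.glue e (r i).1 (s' i).1 ∈ T.consLabFull L),
        p = (∏ i, X (⟨T.glue e (r i).1 (s i).1, h i⟩ : ↥(T.consLabFull L))) -
            ∏ i, X (⟨T.glue e (r i).1 (s' i).1, h' i⟩ : ↥(T.consLabFull L))}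

/-- `Ext(𝓑 → T)` for a set `𝓑` of binomials in the claw-tree ideal `I_{T_v,L}`. -/
noncomputable def ExtClaw (L : G → 𝓛) (v : T.V)
    (B : Set (MvPolynomial ↥(T.consLabClaw L v) ℂ)) :
    Set (MvPolynomial ↥(T.consLabFull L) ℂ) :=
  {p | ∃ (d : ℕ) (r r' : Fin d → ↥(T.consLabClaw L v))
        (Lf Mf : ∀ _ : Fin d, ∀ u : ↥(T.incident v), ↥(T.sideSet v u) → 𝓛)
        (lam mu : Fin d → T.V → 𝓛),
      ((∏ i, X (r i)) - ∏ i, X (r' i)) ∈ B ∧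
      (∀ i u, Lf i u ∈ T.consLab L (T.sideSet v u)) ∧
      (∀ i u, Lf i u ⟨u.1, T.mem_sideSet v u⟩ = (r i).1 u) ∧
      (∀ i u, Mf i u ∈ T.consLab L (T.sideSet v u)) ∧
      (∀ i u, Mf i u ⟨u.1, T.mem_sideSet v u⟩ = (r' i).1 u) ∧
      (∀ u, Multiset.map (fun i => Lf i u) Finset.univ.val
          = Multiset.map (fun i => Mf i u) Finset.univ.val) ∧
      (∀ i u e' (h : e' ∈ T.sideSet v u), lam i e' = Lf i u ⟨e', h⟩) ∧
      (∀ i u e' (h : e' ∈ T.sideSet v u), mu i e' = Mf i u ⟨e', h⟩) ∧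
      ∃ (hl : ∀ i, lam i ∈ T.consLabFull L) (hm : ∀ i, mu i ∈ T.consLabFull L),
        p = (∏ i, X (⟨lam i, hl i⟩ : ↥(T.consLabFull L))) -
            ∏ i, X (⟨mu i, hm i⟩ : ↥(T.consLabFull L))}

end PhyloTree

/-!
Membership of a binomial `∏ q_{λ_i} - ∏ q_{μ_i}` in `I_{T,L}` only depends on the multisets
`{λ_i(e)}` and `{μ_i(e)}` for each edge `e`; every edge of `T` lies in some `T_{v,e_j}`, where
these multisets agree by hypothesis. The content is the consistency of an assembled labeling.
For this, friendliness lets one move the value `g(e)` of a realization to any element with the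
same label while keeping all labels below `e`; doing so at the children of `v` glues
realizations of the pieces into one realization of `T`.
-/

section Friendly

variable {G 𝓛 : Type} [AddCommGroup G] {L : G → 𝓛}

theorem mem_ZSet_succ {k : ℕ} (f : Fin (k + 1) → G) :
    f ∈ ZSet G (k + 1) ↔ ∑ j : Fin k, f j.castSucc = f (Fin.last k) := by
  have hlast : (Finset.univ.filter fun i : Fin (k + 1) => ¬ (i : ℕ) < k + 1 - 1) =
      {Fin.last k} := by
    ext i
    simp only [Finset.mem_filter, Finset.mem_univ, true_and, Finset.mem_singleton,
      Nat.add_sub_cancel, not_lt, Fin.ext_iff, Fin.val_last]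
    exact ⟨fun h => le_antisymm (Nat.le_of_lt_succ i.isLt) h, ge_of_eq⟩
  have hinit : (∑ i ∈ Finset.univ.filter fun i : Fin (k + 1) => (i : ℕ) < k + 1 - 1, f i) =
      ∑ j : Fin k, f j.castSucc := by
    have hsplit := Finset.sum_filter_add_sum_filter_not Finset.univ
      (fun i : Fin (k + 1) => (i : ℕ) < k + 1 - 1) f
    rw [hlast, Finset.sum_singleton, Fin.sum_univ_castSucc f] at hsplit
    exact add_right_cancel hsplit
  rw [ZSet, Set.mem_ofPred_eq, hlast, hinit, Finset.sum_singleton]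

theorem isMFriendly_two : IsMFriendly L 2 := by
  intro g hg i h hh
  have hZ : ∀ f : Fin 2 → G, f ∈ ZSet G 2 ↔ f 0 = f 1 := fun f => by
    simpa [Fin.last] using mem_ZSet_succ (k := 1) f
  have hg01 : g 0 = g 1 := (hZ g).1 hg
  refine ⟨fun _ => h, (hZ _).2 rfl, fun j => ?_, rfl⟩
  rw [hh]
  fin_cases i <;> fin_cases j <;> simp [hg01]

theorem Friendly.isMFriendly (hL : Friendly L) {m : ℕ} (hm : 2 ≤ m) : IsMFriendly L m := by
  obtain rfl | hm3 := hm.eq_or_lt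
  · exact isMFriendly_two
  · exact hL m hm3

/-- Friendliness at the last coordinate of `Z_{k+1}`. -/
theorem Friendly.exists_sum_eq (hL : Friendly L) {ι : Type} [Fintype ι] [Nonempty ι]
    (x : ι → G) {y : G} (hy : L y = L (∑ i, x i)) :
    ∃ z : ι → G, (∀ i, L (z i) = L (x i)) ∧ ∑ i, z i = y := by
  set k := Fintype.card ι
  let eqv := Fintype.equivFin ι
  let f : Fin (k + 1) → G := Fin.snoc (fun j => x (eqv.symm j)) (∑ i, x i)
  have hf : f ∈ ZSet G (k + 1) := by
    rw [mem_ZSet_succ]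
    simpa [f] using Fintype.sum_equiv eqv.symm _ _ fun _ => rfl
  obtain ⟨f', hf', hlabels, hlast⟩ :=
    hL.isMFriendly (by have := Fintype.card_pos (α := ι); omega) f hf (Fin.last k) y
      (by simpa [f] using hy)
  refine ⟨fun i => f' (eqv i).castSucc, fun i => by simp [hlabels, f], ?_⟩
  rw [mem_ZSet_succ] at hf'
  rw [← hlast, ← hf']
  exact Fintype.sum_equiv eqv _ _ fun _ => rfl

end Friendly

namespace PhyloTree

variable {T : PhyloTree}

theorem desc_refl (a : T.V) : T.Desc a a := ⟨0, rfl⟩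

theorem Desc.trans {a b c : T.V} (hab : T.Desc a b) (hbc : T.Desc b c) : T.Desc a c := by
  obtain ⟨m, rfl⟩ := hab
  obtain ⟨n, rfl⟩ := hbc
  exact ⟨n + m, Function.iterate_add_apply _ _ _ _⟩

theorem desc_parent_of_mem_children {c v : T.V} (hc : c ∈ T.children v) : T.Desc c v :=
  ⟨1, hc.1⟩

theorem Desc.parent_of_ne {a b : T.V} (hab : T.Desc a b) (hne : a ≠ b) :
    T.Desc (T.parent a) b := by
  obtain ⟨_ | n, hn⟩ := hab
  · exact absurd hn hne
  · exact ⟨n, by rwa [Function.iterate_succ_apply] at hn⟩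

theorem iterate_parent_root (n : ℕ) : T.parent^[n] T.root = T.root :=
  Function.iterate_fixed T.parent_root n

theorem eq_root_of_iterate_parent_eq_self {w : T.V} {p : ℕ} (hp : 0 < p)
    (h : T.parent^[p] w = w) : w = T.root := by
  obtain ⟨N, hN⟩ := T.reaches_root w
  have hperiodic : T.parent^[p * N] w = w := (Function.IsPeriodicPt.mul_const h N).eq
  rw [show p * N = (p * N - N) + N from (Nat.sub_add_cancel (Nat.le_mul_of_pos_left N hp)).symm,
    Function.iterate_add_apply, hN, iterate_parent_root] at hperiodic
  exact hperiodic.symm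

theorem Desc.antisymm {a b : T.V} (hab : T.Desc a b) (hba : T.Desc b a) : a = b := by
  obtain ⟨m, hm⟩ := hab
  obtain ⟨n, hn⟩ := hba
  rcases Nat.eq_zero_or_pos (n + m) with h | h
  · simpa [show m = 0 by omega] using hm
  · have ha : a = T.root :=
      eq_root_of_iterate_parent_eq_self h (by rw [Function.iterate_add_apply, hm, hn])
    rw [← hm, ha, iterate_parent_root]

theorem Desc.total_of_desc {l u w : T.V} (hu : T.Desc l u) (hw : T.Desc l w) :
    T.Desc u w ∨ T.Desc w u := by
  obtain ⟨a, rfl⟩ := hu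
  obtain ⟨b, rfl⟩ := hw
  rcases Nat.le_total a b with h | h
  · exact .inl ⟨b - a, by rw [← Function.iterate_add_apply, Nat.sub_add_cancel h]⟩
  · exact .inr ⟨a - b, by rw [← Function.iterate_add_apply, Nat.sub_add_cancel h]⟩

theorem eq_of_desc_of_isLeaf {e e' : T.V} (he : T.IsLeaf e) (h : T.Desc e' e) : e' = e := by
  obtain ⟨n, hn⟩ := h
  induction n generalizing e' with
  | zero => exact hn
  | succ n ih =>
    rw [Function.iterate_succ_apply'] at hn
    exact ih (he _ hn)

theorem exists_mem_children_desc {e e' : T.V} (h : T.Desc e' e) (hne : e' ≠ e) :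
    ∃ c ∈ T.children e, T.Desc e' c := by
  obtain ⟨n, hn⟩ := h
  induction n generalizing e' with
  | zero => exact absurd hn hne
  | succ n ih =>
    rw [Function.iterate_succ_apply'] at hn
    by_cases hc : T.parent^[n] e' = e
    · exact ih hne hc
    · exact ⟨_, ⟨hn, hc⟩, n, rfl⟩

theorem eq_of_desc_of_mem_children {e c c' l : T.V} (hc : c ∈ T.children e)
    (hc' : c' ∈ T.children e) (hlc : T.Desc l c) (hlc' : T.Desc l c') : c = c' := by
  have below_parent : ∀ {a b : T.V}, a ∈ T.children e → b ∈ T.children e →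
      T.Desc a b → a ≠ b → False := fun ha hb hab hne =>
    hb.2 (Desc.antisymm (desc_parent_of_mem_children hb) (ha.1 ▸ hab.parent_of_ne hne))
  by_contra hne
  rcases hlc.total_of_desc hlc' with h | h
  · exact below_parent hc hc' h hne
  · exact below_parent hc' hc h (Ne.symm hne)

theorem children_nonempty {e : T.V} (he : ¬ T.IsLeaf e) : (T.children e).Nonempty := by
  simp only [IsLeaf, not_forall] at he
  obtain ⟨c, hc, hne⟩ := he
  exact ⟨c, hc, hne⟩

theorem wellFounded_strictDesc : WellFounded fun a b : T.V => T.Desc a b ∧ a ≠ b :=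
  @Finite.wellFounded_of_trans_of_irrefl _ _ _
    ⟨fun _ _ _ hab hbc => ⟨hab.1.trans hbc.1, fun h => hab.2
      (hab.1.antisymm (h ▸ hbc.1))⟩⟩ ⟨fun _ h => h.2 rfl⟩

section Graft

variable {α : Type*}

noncomputable def graft (e : T.V) (gc : ↥(T.children e) → T.Leaf → α) (g₀ : T.Leaf → α) :
    T.Leaf → α :=
  fun l => if h : ∃ c : ↥(T.children e), T.Desc l.1 c then gc h.choose l else g₀ l

theorem graft_of_desc {e : T.V} (gc : ↥(T.children e) → T.Leaf → α) (g₀ : T.Leaf → α)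
    (c : ↥(T.children e)) {l : T.Leaf} (hl : T.Desc l.1 c) : T.graft e gc g₀ l = gc c l := by
  have h : ∃ c : ↥(T.children e), T.Desc l.1 c := ⟨c, hl⟩
  rw [graft, dif_pos h, Subtype.ext (eq_of_desc_of_mem_children h.choose.2 c.2 h.choose_spec hl)]

theorem graft_of_not_desc {e : T.V} (gc : ↥(T.children e) → T.Leaf → α) (g₀ : T.Leaf → α)
    {l : T.Leaf} (hl : ¬ T.Desc l.1 e) : T.graft e gc g₀ l = g₀ l :=
  dif_neg fun ⟨c, hc⟩ => hl (hc.trans (desc_parent_of_mem_children c.2))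

end Graft

variable {G 𝓛 : Type} [AddCommGroup G] {L : G → 𝓛}

theorem mem_leavesBelow {e : T.V} {l : T.Leaf} : l ∈ T.leavesBelow e ↔ T.Desc l.1 e := by
  simp [leavesBelow]

theorem gsum_of_isLeaf {e : T.V} (he : T.IsLeaf e) (g : T.Leaf → G) :
    T.gsum g e = g ⟨e, he⟩ :=
  Finset.sum_eq_single_of_mem _ (mem_leavesBelow.2 (desc_refl e)) fun _ hl hne =>
    absurd (Subtype.ext (eq_of_desc_of_isLeaf he (mem_leavesBelow.1 hl))) hne

theorem gsum_congr {e : T.V} {g g' : T.Leaf → G}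
    (h : ∀ l : T.Leaf, T.Desc l.1 e → g l = g' l) : T.gsum g e = T.gsum g' e :=
  Finset.sum_congr rfl fun l hl => h l (mem_leavesBelow.1 hl)

theorem gsum_eq_sum_children {e : T.V} (he : ¬ T.IsLeaf e) (g : T.Leaf → G) :
    T.gsum g e = ∑ c : ↥(T.children e), T.gsum g c := by
  have hunion : T.leavesBelow e = Finset.univ.biUnion fun c : ↥(T.children e) =>
      T.leavesBelow c := by
    ext l
    simp only [Finset.mem_biUnion, Finset.mem_univ, true_and, mem_leavesBelow]
    refine ⟨fun h => ?_, fun ⟨c, hc⟩ => hc.trans (desc_parent_of_mem_children c.2)⟩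
    obtain ⟨c, hc, hlc⟩ := exists_mem_children_desc h fun h' => he (h' ▸ l.2)
    exact ⟨⟨c, hc⟩, hlc⟩
  rw [gsum, hunion, Finset.sum_biUnion]
  · rfl
  · intro c _ c' _ hne
    refine Finset.disjoint_left.2 fun l hl hl' => hne (Subtype.ext ?_)
    exact eq_of_desc_of_mem_children c.2 c'.2 (mem_leavesBelow.1 hl) (mem_leavesBelow.1 hl')

/-- `Λ(e')` either misses `Λ(e)` or contains it. -/
theorem gsum_eq_of_eqOn_not_desc {e e' : T.V} {g g' : T.Leaf → G}
    (hout : ∀ l : T.Leaf, ¬ T.Desc l.1 e → g l = g' l) (he : T.gsum g e = T.gsum g' e)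
    (he' : ¬ T.Desc e' e) : T.gsum g e' = T.gsum g' e' := by
  by_cases hee' : T.Desc e e'
  · have hsub : T.leavesBelow e ⊆ T.leavesBelow e' := fun l hl =>
      mem_leavesBelow.2 ((mem_leavesBelow.1 hl).trans hee')
    rw [gsum, gsum, ← Finset.sum_sdiff hsub, ← Finset.sum_sdiff (f := g') hsub]
    refine congrArg₂ (· + ·) (Finset.sum_congr rfl fun l hl => hout l ?_) he
    exact mem_leavesBelow.not.1 (Finset.mem_sdiff.1 hl).2
  · refine gsum_congr fun l hl => hout l fun hle => ?_
    exact (hl.total_of_desc hle).elim he' hee'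

theorem gsum_graft_of_desc {e e' : T.V} (gc : ↥(T.children e) → T.Leaf → G)
    (g₀ : T.Leaf → G) (c : ↥(T.children e)) (he' : T.Desc e' c) :
    T.gsum (T.graft e gc g₀) e' = T.gsum (gc c) e' :=
  gsum_congr fun _ hl => graft_of_desc gc g₀ c (hl.trans he')

theorem gsum_graft {e : T.V} (he : ¬ T.IsLeaf e) (gc : ↥(T.children e) → T.Leaf → G)
    (g₀ : T.Leaf → G) : T.gsum (T.graft e gc g₀) e = ∑ c, T.gsum (gc c) c := by
  rw [gsum_eq_sum_children he]
  exact Fintype.sum_congr _ _ fun c => gsum_graft_of_desc gc g₀ c (desc_refl _)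

/-- Apply friendliness at `e`, then recurse into the children. -/
theorem _root_.Friendly.exists_gsum_eq (hL : Friendly L) (e : T.V) (g₀ : T.Leaf → G) {x : G}
    (hx : L x = L (T.gsum g₀ e)) :
    ∃ g : T.Leaf → G, T.gsum g e = x ∧
      ∀ e', T.Desc e' e → L (T.gsum g e') = L (T.gsum g₀ e') := by
  induction e using wellFounded_strictDesc.induction generalizing x with
  | _ e ih =>
  by_cases he : T.IsLeaf e
  · let leaf : T.Leaf := ⟨e, he⟩
    have hgsum : T.gsum (Function.update g₀ leaf x) e = x := by
      rw [gsum_of_isLeaf he, Function.update_self]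
    refine ⟨Function.update g₀ leaf x, hgsum, fun e' he' => ?_⟩
    rw [eq_of_desc_of_isLeaf he he', hgsum, hx]
  have : Nonempty ↥(T.children e) := (children_nonempty he).to_subtype
  obtain ⟨z, hzL, hz⟩ := hL.exists_sum_eq (fun c : ↥(T.children e) => T.gsum g₀ c)
    (hx.trans (congrArg L (gsum_eq_sum_children he g₀)))
  choose gc hgc hgcL using fun c : ↥(T.children e) =>
    ih c ⟨desc_parent_of_mem_children c.2, c.2.2⟩ (hzL c)
  have hgsum : T.gsum (T.graft e gc g₀) e = x := by
    rw [gsum_graft he, ← hz]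
    exact Fintype.sum_congr _ _ hgc
  refine ⟨T.graft e gc g₀, hgsum, fun e' he' => ?_⟩
  by_cases hee' : e' = e
  · rw [hee', hgsum, hx]
  obtain ⟨c, hc, hc'⟩ := exists_mem_children_desc he' hee'
  rw [gsum_graft_of_desc gc g₀ ⟨c, hc⟩ hc']
  exact hgcL ⟨c, hc⟩ e' hc'

theorem mem_sideSet_self_iff {v e : T.V} :
    e ∈ T.sideSet v ⟨v, .inl rfl⟩ ↔ e = v ∨ ¬ T.Desc e v := by
  simp only [sideSet]
  rfl

theorem mem_sideSet_child_iff {v e : T.V} (c : ↥(T.children v)) :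
    e ∈ T.sideSet v ⟨c, .inr c.2⟩ ↔ T.Desc e c := by
  simp only [sideSet, if_neg c.2.2]
  rfl

theorem exists_mem_sideSet (v e : T.V) : ∃ u, e ∈ T.sideSet v u := by
  by_cases h : T.Desc e v ∧ e ≠ v
  · obtain ⟨c, hc, hec⟩ := exists_mem_children_desc h.1 h.2
    exact ⟨_, (mem_sideSet_child_iff ⟨c, hc⟩).2 hec⟩
  · exact ⟨_, mem_sideSet_self_iff.2 (by tauto)⟩

/-- Realize the claw labeling by `h`; friendliness moves the values `h c` at the children so
that they sum to the value at `v` of the realization of the upper side, and each lower side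
is then retargeted to the new value at its top edge. -/
theorem _root_.Friendly.mem_consLabFull (hL : Friendly L) {v : T.V} (hv : ¬ T.IsLeaf v)
    (ρ : ↥(T.consLabClaw L v)) (F : ∀ u : ↥(T.incident v), ↥(T.sideSet v u) → 𝓛)
    (hF : ∀ u, F u ∈ T.consLab L (T.sideSet v u))
    (hFρ : ∀ u, F u ⟨u.1, T.mem_sideSet v u⟩ = ρ.1 u)
    (lam : T.V → 𝓛) (hlam : ∀ u e (h : e ∈ T.sideSet v u), lam e = F u ⟨e, h⟩) :
    lam ∈ T.consLabFull L := by
  obtain ⟨h, hh⟩ := ρ.2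
  obtain ⟨gp, hgp⟩ := hF ⟨v, .inl rfl⟩
  choose gm hgm using fun c : ↥(T.children v) => hF ⟨c, .inr c.2⟩
  have hLv : L (T.gsum gp v) = L (∑ c, h c) := by
    have hgpv := congrFun hgp ⟨v, T.mem_sideSet v _⟩
    have hhv := congrFun hh ⟨v, .inl rfl⟩
    dsimp only at hgpv hhv
    rw [hgpv, hFρ, ← hhv, dif_pos rfl]
  have hLc : ∀ c, L (T.gsum (gm c) c) = L (h c) := fun c => by
    have hgmc := congrFun (hgm c) ⟨c, T.mem_sideSet v _⟩
    have hhc := congrFun hh ⟨c, .inr c.2⟩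
    dsimp only at hgmc hhc
    rw [hgmc, hFρ, ← hhc, dif_neg c.2.2]
  have : Nonempty ↥(T.children v) := (children_nonempty hv).to_subtype
  obtain ⟨z, hzL, hz⟩ := hL.exists_sum_eq h hLv
  choose gc hgc hgcL using fun c : ↥(T.children v) =>
    hL.exists_gsum_eq c (gm c) ((hzL c).trans (hLc c).symm)
  have hgv : T.gsum (T.graft v gc gp) v = T.gsum gp v := by
    rw [gsum_graft hv, ← hz]
    exact Fintype.sum_congr _ _ hgc
  refine ⟨T.graft v gc gp, funext fun e => ?_⟩
  by_cases he : T.Desc e v ∧ e ≠ v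
  · obtain ⟨c, hc, hec⟩ := exists_mem_children_desc he.1 he.2
    have hmem := (mem_sideSet_child_iff ⟨c, hc⟩).2 hec
    rw [hlam _ e hmem, ← congrFun (hgm ⟨c, hc⟩) ⟨e, hmem⟩]
    exact (congrArg L (gsum_graft_of_desc gc gp ⟨c, hc⟩ hec)).trans (hgcL ⟨c, hc⟩ e hec)
  · have hmem : e ∈ T.sideSet v ⟨v, .inl rfl⟩ := mem_sideSet_self_iff.2 (by tauto)
    rw [hlam _ e hmem, ← congrFun hgp ⟨e, hmem⟩]
    refine congrArg L ?_
    by_cases hev : e = v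
    · subst hev
      exact hgv
    · exact gsum_eq_of_eqOn_not_desc (fun _ => graft_of_not_desc gc gp) hgv (by tauto)

theorem sub_mem_toricIdealFull_of_multiset_eq {ι : Type*} [Fintype ι]
    (l m : ι → ↥(T.consLabFull L))
    (h : ∀ e, Multiset.map (fun i => (l i).1 e) Finset.univ.val =
      Multiset.map (fun i => (m i).1 e) Finset.univ.val) :
    (∏ i, X (l i)) - ∏ i, X (m i) ∈ T.toricIdealFull L := by
  rw [toricIdealFull, RingHom.mem_ker, map_sub, map_prod, map_prod, sub_eq_zero]
  simp only [aeval_X]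
  rw [Finset.prod_comm]
  conv_rhs => rw [Finset.prod_comm]
  refine Finset.prod_congr rfl fun e _ => ?_
  simp only [Finset.prod_eq_multiset_prod]
  simpa only [Multiset.map_map, Function.comp_def] using
    congrArg (fun s => (s.map fun a => (X (e, a) : MvPolynomial (T.V × 𝓛) ℂ)).prod) (h e)

end PhyloTree

theorem assembled_binomial_mem_toricIdeal_general (T : PhyloTree) {G 𝓛 : Type}
    [AddCommGroup G]
    (L : G → 𝓛) (hL : Friendly L) (v : T.V) (hv : ¬ T.IsLeaf v)
    (d : ℕ) (r r' : Fin d → ↥(T.consLabClaw L v))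
    (Lf Mf : ∀ _ : Fin d, ∀ u : ↥(T.incident v), ↥(T.sideSet v u) → 𝓛)
    (hLf : ∀ i u, Lf i u ∈ T.consLab L (T.sideSet v u))
    (hLfe : ∀ i u, Lf i u ⟨u.1, T.mem_sideSet v u⟩ = (r i).1 u)
    (hMf : ∀ i u, Mf i u ∈ T.consLab L (T.sideSet v u))
    (hMfe : ∀ i u, Mf i u ⟨u.1, T.mem_sideSet v u⟩ = (r' i).1 u)
    (hmult : ∀ u, Multiset.map (fun i => Lf i u) Finset.univ.val
                = Multiset.map (fun i => Mf i u) Finset.univ.val)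
    (lam mu : Fin d → T.V → 𝓛)
    (hlam : ∀ i u e' (h : e' ∈ T.sideSet v u), lam i e' = Lf i u ⟨e', h⟩)
    (hmu : ∀ i u e' (h : e' ∈ T.sideSet v u), mu i e' = Mf i u ⟨e', h⟩) :
    ∃ (hl : ∀ i, lam i ∈ T.consLabFull L) (hm : ∀ i, mu i ∈ T.consLabFull L),
      ((∏ i, X (⟨lam i, hl i⟩ : ↥(T.consLabFull L))) -
        ∏ i, X (⟨mu i, hm i⟩ : ↥(T.consLabFull L)))
        ∈ T.toricIdealFull L := by
  have hl i := hL.mem_consLabFull hv (r i) (Lf i) (hLf i) (hLfe i) (lam i) (hlam i)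
  have hm i := hL.mem_consLabFull hv (r' i) (Mf i) (hMf i) (hMfe i) (mu i) (hmu i)
  refine ⟨hl, hm, PhyloTree.sub_mem_toricIdealFull_of_multiset_eq _ _ fun e => ?_⟩
  obtain ⟨u, he⟩ := T.exists_mem_sideSet v e
  simpa only [Multiset.map_map, Function.comp_def, ← hlam _ u e he, ← hmu _ u e he] using
    congrArg (Multiset.map fun f => f ⟨e, he⟩) (hmult u)

/-- **Lemma (local-to-global extension at a vertex).** For a friendly labeling `L` and an
interior vertex `v`, a binomial `g` of the claw-tree ideal `I_{T_v,L}` together with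
compatible consistent labelings `L_i^j`, `M_i^j` of the subtrees `T_{v,e_j}` whose multisets
agree columnwise yields consistent assembled labelings `λ_i`, `μ_i` of `T`, and the binomial
`g* = ∏ q_{λ_i} − ∏ q_{μ_i}` lies in `I_{T,L}`. -/
theorem assembled_binomial_mem_toricIdeal (T : PhyloTree) {G 𝓛 : Type}
    [AddCommGroup G] [Fintype G]
    (L : G → 𝓛) (hL : Friendly L) (v : T.V) (hv : ¬ T.IsLeaf v)
    (d : ℕ) (r r' : Fin d → ↥(T.consLabClaw L v))
    (hbin : ((∏ i, X (r i)) - ∏ i, X (r' i)) ∈ T.clawIdeal L v)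
    (Lf Mf : ∀ _ : Fin d, ∀ u : ↥(T.incident v), ↥(T.sideSet v u) → 𝓛)
    (hLf : ∀ i u, Lf i u ∈ T.consLab L (T.sideSet v u))
    (hLfe : ∀ i u, Lf i u ⟨u.1, T.mem_sideSet v u⟩ = (r i).1 u)
    (hMf : ∀ i u, Mf i u ∈ T.consLab L (T.sideSet v u))
    (hMfe : ∀ i u, Mf i u ⟨u.1, T.mem_sideSet v u⟩ = (r' i).1 u)
    (hmult : ∀ u, Multiset.map (fun i => Lf i u) Finset.univ.val
                = Multiset.map (fun i => Mf i u) Finset.univ.val)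
    (lam mu : Fin d → T.V → 𝓛)
    (hlam : ∀ i u e' (h : e' ∈ T.sideSet v u), lam i e' = Lf i u ⟨e', h⟩)
    (hmu : ∀ i u e' (h : e' ∈ T.sideSet v u), mu i e' = Mf i u ⟨e', h⟩) :
    ∃ (hl : ∀ i, lam i ∈ T.consLabFull L) (hm : ∀ i, mu i ∈ T.consLabFull L),
      ((∏ i, X (⟨lam i, hl i⟩ : ↥(T.consLabFull L))) -
        ∏ i, X (⟨mu i, hm i⟩ : ↥(T.consLabFull L)))
        ∈ T.toricIdealFull L :=
  assembled_binomial_mem_toricIdeal_general T L hL v hv d r r' Lf Mf hLf hLfe hMf hMfe hmult lam mu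
    hlam hmu
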